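/- Let X ⊆ R^2 consist of the five vertices of a regular pentagon together with its center a, and let b be a vertex. Then |sep(a,b)| = 6, and τ(X) = 6 > 5 = phi_2(6) − phi_2(5); i.e., the lower bound sum_{i=1}^{d} C(k-2,i-1) for τ(X) is not always attained. -/

import Mathlib

open scoped RealInnerProductSpace

noncomputable section

def IsPartition {α : Type*} (X : Set α) (P : Set (Set α)) : Prop :=
  (∀ U ∈ P, U.Nonempty) ∧ P.PairwiseDisjoint id ∧ ⋃₀ P = X

def Separates {α : Type*} (P : Set (Set α)) (a b : α) : Prop :=
  ∃ U ∈ P, ∃ V ∈ P, U ≠ V ∧ a ∈ U ∧ b ∈ V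

def IsFull {α : Type*} (X : Set α) (S : Set (Set (Set α))) : Prop :=
  ∀ a ∈ X, ∀ b ∈ X, a ≠ b → ∃ P ∈ S, Separates P a b

def IsTransversal {α : Type*} (X : Set α) (C T : Set (Set (Set α))) : Prop :=
  T ⊆ C ∧ ∀ S ⊆ C, IsFull X S → (S ∩ T).Nonempty

def IsMinimalTransversal {α : Type*} (X : Set α) (C T : Set (Set (Set α))) : Prop :=
  IsTransversal X C T ∧ ∀ T' ⊆ T, IsTransversal X C T' → T' = T

def sep {α : Type*} (C : Set (Set (Set α))) (a b : α) : Set (Set (Set α)) :=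
  {P ∈ C | Separates P a b}

abbrev Euc (d : ℕ) : Type := EuclideanSpace ℝ (Fin d)

def RealizedByHyperplane {d : ℕ} (X : Set (Euc d)) (P : Set (Set (Euc d))) : Prop :=
  P = {X} ∨ ∃ (v : Euc d) (c : ℝ), v ≠ 0 ∧ (∀ x ∈ X, ⟪v, x⟫ ≠ c) ∧
    (X ∩ {x | ⟪v, x⟫ < c}).Nonempty ∧ (X ∩ {x | c < ⟪v, x⟫}).Nonempty ∧
    P = {X ∩ {x | ⟪v, x⟫ < c}, X ∩ {x | c < ⟪v, x⟫}}

def HSet {d : ℕ} (X : Set (Euc d)) : Set (Set (Set (Euc d))) :=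
  {P | RealizedByHyperplane X P}

def GenPos {d : ℕ} (X : Set (Euc d)) : Prop :=
  ∀ (v : Euc d) (c : ℝ), v ≠ 0 → (X ∩ {x | ⟪v, x⟫ = c}).encard ≤ (d : ℕ∞)

def phi (d k : ℕ) : ℕ := ∑ i ∈ Finset.range (d + 1), (k - 1).choose i

def eta (d k : ℕ) : ℕ := ∑ i ∈ Finset.range (d + 1), (k - 2).choose i

def tauX {d : ℕ} (X : Set (Euc d)) : ℕ :=
  sInf {n | ∃ T, IsMinimalTransversal X (HSet X) T ∧ T.ncard = n}

def etaX {d : ℕ} (X : Set (Euc d)) : ℕ :=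
  sSup {n | ∃ T, IsMinimalTransversal X (HSet X) T ∧ T.ncard = n}

def tauD (d k : ℕ) : ℕ :=
  sInf {n | ∃ X : Set (Euc d), X.Finite ∧ GenPos X ∧ X.ncard = k ∧ tauX X = n}

def etaD (d k : ℕ) : ℕ :=
  sSup {n | ∃ X : Set (Euc d), X.Finite ∧ GenPos X ∧ X.ncard = k ∧ etaX X = n}

/-!
A line avoiding `X` leaves the centre `0` on one side; call `A` the set of vertices on the other
side. The relations `p (j - 1) + p (j + 1) = 2 cos (2π/5) • p j` (with `0 < 2 cos (2π/5) < 1`) and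
`p (j + 2) + p (j + 3) = -2 cos (π/5) • p j` show that `A` contains `j` whenever it contains both
neighbours of `j`, and never contains `j` together with `j + 2` and `j + 3`. Hence `A` is an arc of
one, two or three consecutive vertices, and each of these 15 arcs is cut off by a line orthogonal
to its middle direction. A vertex lies on exactly 6 arcs, and any two vertices are split by at
least 6 arcs. Finally, a family of partitions meets every full subfamily iff it contains some
`sep x y` (otherwise its complement is full), so the minimal transversals are the minimal sets
`sep x y`, and `τ(X)` is the least `|sep x y|`, namely `|sep 0 (p 0)| = 6`.
-/

lemma separates_pair_iff {α : Type*} {U V : Set α} {a b : α} (hUV : U ≠ V) :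
    Separates {U, V} a b ↔ (a ∈ U ∧ b ∈ V) ∨ (a ∈ V ∧ b ∈ U) := by
  constructor
  · rintro ⟨U', hU', V', hV', hne, ha, hb⟩
    rcases hU' with rfl | rfl <;> rcases hV' with rfl | rfl
    all_goals first | exact absurd rfl hne | tauto
  · rintro (⟨ha, hb⟩ | ⟨ha, hb⟩)
    · exact ⟨U, Or.inl rfl, V, Or.inr rfl, hUV, ha, hb⟩
    · exact ⟨V, Or.inr rfl, U, Or.inl rfl, hUV.symm, ha, hb⟩

lemma not_separates_singleton {α : Type*} (U : Set α) (a b : α) : ¬ Separates {U} a b := by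
  rintro ⟨U₁, rfl, U₂, rfl, hne, -⟩
  exact hne rfl

section Cut

variable {d : ℕ} {ι : Type*} (p : ι → Euc d)

def cut (F : Set ι) : Set (Set (Euc d)) := {insert 0 (p '' Fᶜ), p '' F}

variable {p}

lemma inter_setOf_lt_inner_eq_image {v : Euc d} {c : ℝ} (hc : 0 < c) :
    insert 0 (Set.range p) ∩ {x | c < ⟪v, x⟫} = p '' {i | c < ⟪v, p i⟫} := by
  ext x
  simp only [Set.mem_inter_iff, Set.mem_insert_iff, Set.mem_range, Set.mem_ofPred_eq,
    Set.mem_image]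
  constructor
  · rintro ⟨rfl | ⟨i, rfl⟩, hx⟩
    · rw [inner_zero_right] at hx; linarith
    · exact ⟨i, hx, rfl⟩
  · rintro ⟨i, hi, rfl⟩
    exact ⟨Or.inr ⟨i, rfl⟩, hi⟩

lemma inter_setOf_inner_lt_eq_insert_image {v : Euc d} {c : ℝ} (hc : 0 < c)
    (hv : ∀ i, ⟪v, p i⟫ ≠ c) :
    insert 0 (Set.range p) ∩ {x | ⟪v, x⟫ < c} = insert 0 (p '' {i | c < ⟪v, p i⟫}ᶜ) := by
  ext x
  simp only [Set.mem_inter_iff, Set.mem_insert_iff, Set.mem_range, Set.mem_ofPred_eq,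
    Set.mem_image, Set.mem_compl_iff, not_lt]
  constructor
  · rintro ⟨rfl | ⟨i, rfl⟩, hx⟩
    · exact Or.inl rfl
    · exact Or.inr ⟨i, hx.le, rfl⟩
  · rintro (rfl | ⟨i, hi, rfl⟩)
    · simpa using hc
    · exact ⟨Or.inr ⟨i, rfl⟩, lt_of_le_of_ne hi (hv i)⟩

lemma cut_mem_hSet {v : Euc d} {c : ℝ} (hc : 0 < c) (hv : ∀ i, ⟪v, p i⟫ ≠ c)
    (hne : ∃ i, c < ⟪v, p i⟫) : cut p {i | c < ⟪v, p i⟫} ∈ HSet (insert 0 (Set.range p)) := by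
  obtain ⟨i, hi⟩ := hne
  refine Or.inr ⟨v, c, ?_, ?_, ⟨0, by simpa using hc⟩, ⟨p i, Or.inr ⟨i, rfl⟩, hi⟩, ?_⟩
  · rintro rfl
    rw [inner_zero_left] at hi; linarith
  · rintro x (rfl | ⟨j, rfl⟩)
    · simpa using hc.ne
    · exact hv j
  · rw [inter_setOf_inner_lt_eq_insert_image hc hv, inter_setOf_lt_inner_eq_image hc, cut]

lemma exists_cut_eq_of_mem_hSet {P : Set (Set (Euc d))}
    (hP : P ∈ HSet (insert 0 (Set.range p))) (hPX : P ≠ {insert 0 (Set.range p)}) :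
    ∃ (v : Euc d) (c : ℝ), 0 < c ∧ (∀ i, ⟪v, p i⟫ ≠ c) ∧ (∃ i, c < ⟪v, p i⟫) ∧
      P = cut p {i | c < ⟪v, p i⟫} := by
  obtain ⟨v, c, -, hv, hlt, hgt, rfl⟩ := hP.resolve_left hPX
  have hv' : ∀ i, ⟪v, p i⟫ ≠ c := fun i => hv _ (Or.inr ⟨i, rfl⟩)
  have hc : c ≠ 0 := fun h => hv 0 (Or.inl rfl) (by simp [h])
  rcases hc.lt_or_gt with hc | hc
  · have hv'' : ∀ i, ⟪-v, p i⟫ ≠ -c := fun i h => hv' i (by simpa using h)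
    refine ⟨-v, -c, neg_pos.2 hc, hv'', ?_, ?_⟩
    · obtain ⟨x, hx, hxc⟩ := hlt
      rcases hx with rfl | ⟨i, rfl⟩
      · rw [Set.mem_ofPred_eq, inner_zero_right] at hxc; linarith
      · exact ⟨i, by simpa [inner_neg_left] using hxc⟩
    · rw [cut, ← inter_setOf_inner_lt_eq_insert_image (neg_pos.2 hc) hv'',
        ← inter_setOf_lt_inner_eq_image (neg_pos.2 hc), Set.pair_comm]
      simp only [inner_neg_left, neg_lt_neg_iff]
  · refine ⟨v, c, hc, hv', ?_, ?_⟩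
    · obtain ⟨x, hx, hxc⟩ := hgt
      rcases hx with rfl | ⟨i, rfl⟩
      · rw [Set.mem_ofPred_eq, inner_zero_right] at hxc; linarith
      · exact ⟨i, hxc⟩
    · rw [cut, inter_setOf_inner_lt_eq_insert_image hc hv', inter_setOf_lt_inner_eq_image hc]


lemma zero_notMem_image (h0 : (0 : Euc d) ∉ Set.range p) (F : Set ι) : (0 : Euc d) ∉ p '' F :=
  fun ⟨i, _, hi⟩ => h0 ⟨i, hi⟩

lemma mem_insert_zero_image_compl_iff (hp : Function.Injective p)
    (h0 : (0 : Euc d) ∉ Set.range p) {F : Set ι} {i : ι} : p i ∈ insert 0 (p '' Fᶜ) ↔ i ∉ F := by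
  rw [Set.mem_insert_iff, hp.mem_set_image, Set.mem_compl_iff, or_iff_right]
  exact fun h => h0 ⟨i, h⟩

lemma cut_parts_ne (h0 : (0 : Euc d) ∉ Set.range p) (F : Set ι) :
    insert 0 (p '' Fᶜ) ≠ p '' F :=
  fun h => zero_notMem_image h0 F (h ▸ Set.mem_insert 0 _)

lemma cut_injective (hp : Function.Injective p) (h0 : (0 : Euc d) ∉ Set.range p) :
    Function.Injective (cut p) := by
  intro F G h
  have hF : p '' F ∈ cut p G := h ▸ Or.inr rfl
  rcases hF with hF | hF
  · exact absurd (hF ▸ Set.mem_insert 0 _) (zero_notMem_image h0 F)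
  · exact (Set.image_injective.2 hp) hF

lemma separates_cut_zero_iff (hp : Function.Injective p) (h0 : (0 : Euc d) ∉ Set.range p)
    {F : Set ι} {j : ι} : Separates (cut p F) 0 (p j) ↔ j ∈ F := by
  rw [cut, separates_pair_iff (cut_parts_ne h0 F), hp.mem_set_image,
    mem_insert_zero_image_compl_iff hp h0]
  simp [zero_notMem_image h0]

lemma separates_cut_iff (hp : Function.Injective p) (h0 : (0 : Euc d) ∉ Set.range p)
    {F : Set ι} {i j : ι} : Separates (cut p F) (p i) (p j) ↔ Xor (i ∈ F) (j ∈ F) := by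
  rw [cut, separates_pair_iff (cut_parts_ne h0 F), hp.mem_set_image, hp.mem_set_image,
    mem_insert_zero_image_compl_iff hp h0, mem_insert_zero_image_compl_iff hp h0, Xor]
  tauto

end Cut

section Transversal

variable {α : Type*} {X : Set α} {C : Set (Set (Set α))}

lemma sep_comm (C : Set (Set (Set α))) (a b : α) : sep C a b = sep C b a := by
  have key : ∀ a b : α, sep C a b ⊆ sep C b a := by
    rintro a b P ⟨hP, U, hU, V, hV, hUV, ha, hb⟩
    exact ⟨hP, V, hV, U, hU, hUV.symm, hb, ha⟩
  exact (key a b).antisymm (key b a)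

lemma isTransversal_iff {T : Set (Set (Set α))} :
    IsTransversal X C T ↔ T ⊆ C ∧ ∃ a ∈ X, ∃ b ∈ X, a ≠ b ∧ sep C a b ⊆ T := by
  refine ⟨fun ⟨hTC, hT⟩ => ⟨hTC, ?_⟩, fun ⟨hTC, a, ha, b, hb, hab, hsep⟩ => ⟨hTC, ?_⟩⟩
  · by_contra! hno
    have hfull : IsFull X (C \ T) := fun a ha b hb hab => by
      obtain ⟨P, hP, hPT⟩ := Set.not_subset.1 (hno a ha b hb hab)
      exact ⟨P, ⟨hP.1, hPT⟩, hP.2⟩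
    obtain ⟨P, hPC, hPT⟩ := hT (C \ T) Set.sdiff_subset hfull
    exact hPC.2 hPT
  · intro S hS hfull
    obtain ⟨P, hPS, hPsep⟩ := hfull a ha b hb hab
    exact ⟨P, hPS, hsep ⟨hS hPS, hPsep⟩⟩

lemma isTransversal_sep {a b : α} (ha : a ∈ X) (hb : b ∈ X) (hab : a ≠ b) :
    IsTransversal X C (sep C a b) :=
  isTransversal_iff.2 ⟨fun _ hP => hP.1, a, ha, b, hb, hab, subset_rfl⟩

lemma exists_eq_sep_of_isMinimalTransversal {T : Set (Set (Set α))}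
    (hT : IsMinimalTransversal X C T) : ∃ a ∈ X, ∃ b ∈ X, a ≠ b ∧ T = sep C a b := by
  obtain ⟨-, a, ha, b, hb, hab, hsub⟩ := isTransversal_iff.1 hT.1
  exact ⟨a, ha, b, hb, hab, (hT.2 _ hsub (isTransversal_sep ha hb hab)).symm⟩

lemma isMinimalTransversal_sep {a b : α} (ha : a ∈ X) (hb : b ∈ X) (hab : a ≠ b)
    (hfin : (sep C a b).Finite)
    (hmin : ∀ a' ∈ X, ∀ b' ∈ X, a' ≠ b' → (sep C a b).ncard ≤ (sep C a' b').ncard) :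
    IsMinimalTransversal X C (sep C a b) := by
  refine ⟨isTransversal_sep ha hb hab, fun T hT hTtr => hT.antisymm ?_⟩
  obtain ⟨-, a', ha', b', hb', hab', hsub⟩ := isTransversal_iff.1 hTtr
  have := Set.eq_of_subset_of_ncard_le (hsub.trans hT) (hmin a' ha' b' hb' hab') hfin
  exact this ▸ hsub

end Transversal

lemma tauX_eq_ncard_sep {d : ℕ} {X : Set (Euc d)} {a b : Euc d} (ha : a ∈ X) (hb : b ∈ X)
    (hab : a ≠ b) (hfin : (sep (HSet X) a b).Finite)
    (hmin : ∀ a' ∈ X, ∀ b' ∈ X, a' ≠ b' →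
      (sep (HSet X) a b).ncard ≤ (sep (HSet X) a' b').ncard) :
    tauX X = (sep (HSet X) a b).ncard := by
  have hmem : (sep (HSet X) a b).ncard ∈
      {n | ∃ T, IsMinimalTransversal X (HSet X) T ∧ T.ncard = n} :=
    ⟨_, isMinimalTransversal_sep ha hb hab hfin hmin, rfl⟩
  refine (Nat.sInf_le hmem).antisymm (le_csInf ⟨_, hmem⟩ ?_)
  rintro n ⟨T, hT, rfl⟩
  obtain ⟨a', ha', b', hb', hab', rfl⟩ := exists_eq_sep_of_isMinimalTransversal hT
  exact hmin a' ha' b' hb' hab'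

open Real

def dir (θ : ℝ) : Euc 2 := (WithLp.equiv 2 (∀ _ : Fin 2, ℝ)).symm ![cos θ, sin θ]

lemma inner_dir (θ φ : ℝ) : ⟪dir θ, dir φ⟫ = cos (θ - φ) := by
  simp only [dir, WithLp.equiv_symm_apply, PiLp.inner_apply, RCLike.inner_apply, ringHom_apply,
    Fin.sum_univ_two, Fin.isValue, Matrix.cons_val_zero, Matrix.cons_val_one,
    Matrix.cons_val_fin_one, cos_sub]
  ring

lemma dir_add_nat_mul_two_pi (θ : ℝ) (n : ℕ) : dir (θ + n * (2 * π)) = dir θ := by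
  simp only [dir, cos_add_nat_mul_two_pi, sin_add_nat_mul_two_pi]

lemma dir_sub_add_dir_add (θ φ : ℝ) : dir (θ - φ) + dir (θ + φ) = (2 * cos φ) • dir θ := by
  ext i
  fin_cases i <;>
    simp only [dir, WithLp.equiv_symm_apply, PiLp.add_apply, PiLp.smul_apply, smul_eq_mul,
      Fin.isValue, Fin.zero_eta, Fin.mk_one, Matrix.cons_val_zero, Matrix.cons_val_one,
      Matrix.cons_val_fin_one, cos_add, cos_sub, sin_add, sin_sub] <;>
    ring

def vertex (j : Fin 5) : Euc 2 := dir (2 * π * (j : ℕ) / 5)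

lemma vertex_add (j k : Fin 5) :
    vertex (j + k) = dir (2 * π * (j : ℕ) / 5 + 2 * π * (k : ℕ) / 5) := by
  have h : (((j + k : Fin 5) : ℕ) : ℝ) + 5 * (((j : ℕ) + k) / 5 : ℕ) = (j : ℕ) + (k : ℕ) := by
    rw [Fin.val_add]; exact_mod_cast Nat.mod_add_div _ _
  rw [vertex, ← dir_add_nat_mul_two_pi _ (((j : ℕ) + k) / 5)]
  congr 1
  linear_combination (2 * π / 5) * h

lemma inner_dir_vertex_add (θ : ℝ) (j k : Fin 5) :
    ⟪dir (2 * π * (j : ℕ) / 5 + θ), vertex (j + k)⟫ = cos (θ - 2 * π * (k : ℕ) / 5) := by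
  rw [vertex_add, inner_dir]; ring_nf

lemma vertex_add_four_add_vertex_add_one (j : Fin 5) :
    vertex (j + 4) + vertex (j + 1) = (2 * cos (2 * π / 5)) • vertex j := by
  rw [vertex_add, vertex_add, vertex, ← dir_sub_add_dir_add,
    ← dir_add_nat_mul_two_pi (_ - _) 1]
  congr 2
  · norm_num; ring
  · norm_num

lemma vertex_add_three_add_vertex_add_two (j : Fin 5) :
    vertex (j + 3) + vertex (j + 2) = (-2 * cos (π / 5)) • vertex j := by
  have h : -2 * cos (π / 5) = 2 * cos (4 * π / 5) := by
    rw [show 4 * π / 5 = π - π / 5 by ring, cos_pi_sub]; ring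
  rw [vertex_add, vertex_add, vertex, h, ← dir_sub_add_dir_add,
    ← dir_add_nat_mul_two_pi (_ - _) 1]
  congr 2 <;> norm_num <;> ring

lemma cos_two_pi_div_five_pos : 0 < cos (2 * π / 5) :=
  cos_pos_of_mem_Ioo ⟨by linarith [pi_pos], by linarith [pi_pos]⟩

lemma cos_two_pi_div_five_lt : cos (2 * π / 5) < 1 / 2 := by
  rw [← cos_pi_div_three]
  exact cos_lt_cos_of_nonneg_of_le_pi (by positivity) (by linarith [pi_pos]) (by linarith [pi_pos])

lemma lt_cos_pi_div_five : 1 / 2 < cos (π / 5) := by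
  rw [← cos_pi_div_three]
  exact cos_lt_cos_of_nonneg_of_le_pi (by positivity) (by linarith [pi_pos]) (by linarith [pi_pos])

lemma cos_zero_sub_vertex_angle (k : Fin 5) :
    cos (0 - 2 * π * (k : ℕ) / 5) =
      ![1, cos (2 * π / 5), -cos (π / 5), -cos (π / 5), cos (2 * π / 5)] k := by
  match k with
  | 0 => simp
  | 1 => rw [show (0 : ℝ) - 2 * π * ((1 : Fin 5) : ℕ) / 5 = -(2 * π / 5) by norm_num, cos_neg]; rfl
  | 2 => rw [show (0 : ℝ) - 2 * π * ((2 : Fin 5) : ℕ) / 5 = -(π - π / 5) by norm_num; ring, cos_neg,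
      cos_pi_sub]; rfl
  | 3 => rw [show (0 : ℝ) - 2 * π * ((3 : Fin 5) : ℕ) / 5 = -(π / 5 + π) by norm_num; ring, cos_neg,
      cos_add_pi]; rfl
  | 4 => rw [show (0 : ℝ) - 2 * π * ((4 : Fin 5) : ℕ) / 5 = -(2 * π - 2 * π / 5) by norm_num; ring,
      cos_neg, cos_two_pi_sub]; rfl

lemma cos_pi_div_five_sub_vertex_angle (k : Fin 5) :
    cos (π / 5 - 2 * π * (k : ℕ) / 5) =
      ![cos (π / 5), cos (π / 5), -cos (2 * π / 5), -1, -cos (2 * π / 5)] k := by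
  match k with
  | 0 => simp
  | 1 => rw [show π / 5 - 2 * π * ((1 : Fin 5) : ℕ) / 5 = -(π / 5) by norm_num; ring, cos_neg]; rfl
  | 2 => rw [show π / 5 - 2 * π * ((2 : Fin 5) : ℕ) / 5 = -(π - 2 * π / 5) by norm_num; ring,
      cos_neg, cos_pi_sub]; rfl
  | 3 => rw [show π / 5 - 2 * π * ((3 : Fin 5) : ℕ) / 5 = -π by norm_num; ring, cos_neg,
      cos_pi]; rfl
  | 4 => rw [show π / 5 - 2 * π * ((4 : Fin 5) : ℕ) / 5 = -(2 * π / 5 + π) by norm_num; ring,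
      cos_neg, cos_add_pi]; rfl

def arcs : Finset (Finset (Fin 5)) :=
  Finset.univ.biUnion fun j => {{j}, {j, j + 1}, {j + 4, j, j + 1}}

lemma mem_arcs_of_closed (A : Finset (Fin 5)) (hA : A.Nonempty)
    (h₁ : ∀ j, j + 4 ∈ A → j + 1 ∈ A → j ∈ A) (h₂ : ∀ j, j + 3 ∈ A → j + 2 ∈ A → j ∉ A) :
    A ∈ arcs := by
  revert A; decide

lemma card_arcs_filter_mem (j : Fin 5) : (arcs.filter (j ∈ ·)).card = 6 := by
  revert j; decide

lemma six_le_card_arcs_filter_xor (i j : Fin 5) (hij : i ≠ j) :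
    6 ≤ (arcs.filter fun F => Xor (i ∈ F) (j ∈ F)).card := by
  revert i j; decide

local notation "X₅" => insert (0 : Euc 2) (Set.range vertex)

lemma inner_vertex_self (j : Fin 5) : ⟪vertex j, vertex j⟫ = 1 := by
  rw [vertex, inner_dir, sub_self, cos_zero]

lemma zero_notMem_range_vertex : (0 : Euc 2) ∉ Set.range vertex := by
  rintro ⟨j, hj⟩
  simpa [hj] using inner_vertex_self j

lemma vertex_injective : Function.Injective vertex := by
  intro i j hij
  obtain ⟨k, rfl⟩ : ∃ k, j = i + k := ⟨j - i, (add_sub_cancel i j).symm⟩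
  have h := inner_dir_vertex_add 0 i k
  rw [add_zero, ← vertex, ← hij, inner_vertex_self, cos_zero_sub_vertex_angle] at h
  have := cos_two_pi_div_five_lt
  have := lt_cos_pi_div_five
  match k, h with
  | 0, _ => simp
  | 1, h | 2, h | 3, h | 4, h => dsimp at h; linarith

lemma cut_image_add_mem_hSet {θ c : ℝ} {S : Finset (Fin 5)} (hc : 0 < c) (hS : S.Nonempty)
    (hsep : ∀ k, (k ∈ S → c < cos (θ - 2 * π * (k : ℕ) / 5)) ∧
      (k ∉ S → cos (θ - 2 * π * (k : ℕ) / 5) < c)) (j : Fin 5) :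
    cut vertex ↑(S.image (j + ·)) ∈ HSet X₅ := by
  set v := dir (2 * π * (j : ℕ) / 5 + θ)
  have hcut : {i | c < ⟪v, vertex i⟫} = ↑(S.image (j + ·)) := by
    ext i
    obtain ⟨k, rfl⟩ : ∃ k, i = j + k := ⟨i - j, (add_sub_cancel j i).symm⟩
    simp only [Set.mem_ofPred_eq, Finset.coe_image, Set.mem_image, Finset.mem_coe, add_right_inj,
      exists_eq_right, v, inner_dir_vertex_add]
    by_cases hk : k ∈ S
    · simpa [hk] using (hsep k).1 hk
    · simpa [hk] using ((hsep k).2 hk).le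
  rw [← hcut]
  refine cut_mem_hSet hc (fun i => ?_) ?_
  · obtain ⟨k, rfl⟩ : ∃ k, i = j + k := ⟨i - j, (add_sub_cancel j i).symm⟩
    rw [inner_dir_vertex_add]
    by_cases hk : k ∈ S
    · exact ((hsep k).1 hk).ne'
    · exact ((hsep k).2 hk).ne
  · obtain ⟨k, hk⟩ := hS
    exact ⟨j + k, by rw [inner_dir_vertex_add]; exact (hsep k).1 hk⟩

lemma cut_arc_mem_hSet {F : Finset (Fin 5)} (hF : F ∈ arcs) : cut vertex ↑F ∈ HSet X₅ := by
  have ha₀ := cos_two_pi_div_five_pos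
  have ha := cos_two_pi_div_five_lt
  have hb := lt_cos_pi_div_five
  simp only [arcs, Finset.mem_biUnion, Finset.mem_univ, true_and, Finset.mem_insert,
    Finset.mem_singleton] at hF
  obtain ⟨j, rfl | rfl | rfl⟩ := hF
  · simpa using cut_image_add_mem_hSet (θ := 0) (S := {0}) (c := 1 / 2) (by norm_num) (by simp)
      (fun k => by
        rw [cos_zero_sub_vertex_angle]; fin_cases k <;> simp [-cos_pi_div_five] <;> linarith) j
  · simpa using cut_image_add_mem_hSet (θ := π / 5) (S := {0, 1}) (c := 1 / 2) (by norm_num)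
      (by simp) (fun k => by
        rw [cos_pi_div_five_sub_vertex_angle]
        fin_cases k <;> simp [-cos_pi_div_five] <;> linarith) j
  · simpa using cut_image_add_mem_hSet (θ := 0) (S := {4, 0, 1}) (c := cos (2 * π / 5) / 2)
      (by positivity) (by simp) (fun k => by
        rw [cos_zero_sub_vertex_angle]; fin_cases k <;> simp [-cos_pi_div_five] <;> linarith) j

lemma lt_inner_vertex_of_lt_inner_neighbors {v : Euc 2} {c : ℝ} (hc : 0 < c) {j : Fin 5}
    (h₄ : c < ⟪v, vertex (j + 4)⟫) (h₁ : c < ⟪v, vertex (j + 1)⟫) : c < ⟪v, vertex j⟫ := by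
  have h := congrArg (⟪v, ·⟫) (vertex_add_four_add_vertex_add_one j)
  simp only [inner_add_right, inner_smul_right] at h
  nlinarith [cos_two_pi_div_five_pos, cos_two_pi_div_five_lt]

lemma inner_vertex_neg_of_lt_inner_opposite {v : Euc 2} {c : ℝ} (hc : 0 < c) {j : Fin 5}
    (h₃ : c < ⟪v, vertex (j + 3)⟫) (h₂ : c < ⟪v, vertex (j + 2)⟫) : ⟪v, vertex j⟫ < 0 := by
  have h := congrArg (⟪v, ·⟫) (vertex_add_three_add_vertex_add_two j)
  simp only [inner_add_right, inner_smul_right] at h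
  nlinarith [lt_cos_pi_div_five]

lemma hSet_eq_insert_image_cut_arcs :
    HSet X₅ = insert {X₅} ((fun F : Finset (Fin 5) => cut vertex ↑F) '' ↑arcs) := by
  ext P
  refine ⟨fun hP => ?_, ?_⟩
  · by_cases hPX : P = {X₅}
    · exact Or.inl hPX
    obtain ⟨v, c, hc, -, ⟨i, hi⟩, rfl⟩ := exists_cut_eq_of_mem_hSet hP hPX
    set A := Finset.univ.filter fun i => c < ⟪v, vertex i⟫
    refine Or.inr ⟨A, mem_arcs_of_closed A ⟨i, by simpa [A] using hi⟩ ?_ ?_, by simp [A]⟩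
    · simpa [A] using fun j => lt_inner_vertex_of_lt_inner_neighbors hc (j := j)
    · simp only [Finset.mem_filter, Finset.mem_univ, true_and, not_lt, A]
      exact fun j h₃ h₂ => (inner_vertex_neg_of_lt_inner_opposite hc h₃ h₂).le.trans hc.le
  · rintro (rfl | ⟨F, hF, rfl⟩)
    · exact Or.inl rfl
    · exact cut_arc_mem_hSet hF

lemma sep_insert_singleton_image {α β : Type*} (U : Set α) (f : β → Set (Set α)) (S : Set β)
    (a b : α) : sep (insert {U} (f '' S)) a b = f '' {F ∈ S | Separates (f F) a b} := by
  ext P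
  simp only [sep, Set.mem_insert_iff, Set.mem_image, Set.mem_ofPred_eq]
  constructor
  · rintro ⟨rfl | ⟨F, hF, rfl⟩, hP⟩
    · exact absurd hP (not_separates_singleton U a b)
    · exact ⟨F, ⟨hF, hP⟩, rfl⟩
  · rintro ⟨F, ⟨hF, hP⟩, rfl⟩
    exact ⟨Or.inr ⟨F, hF, rfl⟩, hP⟩

lemma ncard_image_cut_vertex (s : Finset (Finset (Fin 5))) :
    ((fun F : Finset (Fin 5) => cut vertex ↑F) '' ↑s).ncard = s.card :=
  (Set.ncard_image_of_injective _
    ((cut_injective vertex_injective zero_notMem_range_vertex).comp Finset.coe_injective)).trans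
    (Set.ncard_coe_finset s)

lemma sep_zero_vertex_eq (j : Fin 5) : sep (HSet X₅) 0 (vertex j) =
    (fun F : Finset (Fin 5) => cut vertex ↑F) '' ↑(arcs.filter (j ∈ ·)) := by
  rw [hSet_eq_insert_image_cut_arcs, sep_insert_singleton_image]
  ext P
  simp [separates_cut_zero_iff vertex_injective zero_notMem_range_vertex]

lemma sep_vertex_vertex_eq (i j : Fin 5) : sep (HSet X₅) (vertex i) (vertex j) =
    (fun F : Finset (Fin 5) => cut vertex ↑F) '' ↑(arcs.filter fun F => Xor (i ∈ F) (j ∈ F)) := by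
  rw [hSet_eq_insert_image_cut_arcs, sep_insert_singleton_image]
  ext P
  simp [separates_cut_iff vertex_injective zero_notMem_range_vertex]

lemma ncard_sep_zero_vertex (j : Fin 5) : (sep (HSet X₅) 0 (vertex j)).ncard = 6 := by
  rw [sep_zero_vertex_eq, ncard_image_cut_vertex, card_arcs_filter_mem]

lemma six_le_ncard_sep_vertex {i j : Fin 5} (hij : i ≠ j) :
    6 ≤ (sep (HSet X₅) (vertex i) (vertex j)).ncard := by
  rw [sep_vertex_vertex_eq, ncard_image_cut_vertex]
  exact six_le_card_arcs_filter_xor i j hij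

lemma six_le_ncard_sep : ∀ a ∈ X₅, ∀ b ∈ X₅, a ≠ b → 6 ≤ (sep (HSet X₅) a b).ncard := by
  rintro a (rfl | ⟨i, rfl⟩) b (rfl | ⟨j, rfl⟩) hab
  · exact absurd rfl hab
  · exact (ncard_sep_zero_vertex j).ge
  · exact sep_comm (HSet X₅) _ _ ▸ (ncard_sep_zero_vertex i).ge
  · exact six_le_ncard_sep_vertex (ne_of_apply_ne vertex hab)

theorem stmt19 :
    ∀ pts : Fin 5 → Euc 2,
      (pts = fun (j : Fin 5) => (WithLp.equiv 2 (∀ _ : Fin 2, ℝ)).symm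
        ![Real.cos (2 * Real.pi * (j : ℕ) / 5), Real.sin (2 * Real.pi * (j : ℕ) / 5)]) →
      ∀ X : Set (Euc 2), X = insert 0 (Set.range pts) →
        (sep (HSet X) 0 (pts 0)).ncard = 6 ∧ tauX X = 6 ∧
        phi 2 6 - phi 2 5 = 5 ∧ 5 < 6 := by
  intro pts hpts X hX
  obtain rfl : pts = vertex := hpts
  subst hX
  have h6 := ncard_sep_zero_vertex 0
  refine ⟨h6, ?_, by decide, by norm_num⟩
  rw [← h6]
  exact tauX_eq_ncard_sep (Or.inl rfl) (Or.inr ⟨0, rfl⟩)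
    (fun h => zero_notMem_range_vertex ⟨0, h.symm⟩) (Set.finite_of_ncard_ne_zero (by omega))
    (h6 ▸ six_le_ncard_sep)
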